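/- arXiv:1204.3293 — 2 statements merged into one kernel-verified Lean document; each statement's English description precedes it below -/
import Mathlib

section
/- If a string w contains a factorization w = v₁ x v₂ x v₃ x u where x is a single character and v₂ ≠ v₃ are strings not containing x, then w is not uniquely decodable from its bigrams: the string v₁ x v₃ x v₂ x u has the same bigram multiset as w. -/
/-!
Cutting a list at an occurrence of a letter `x` splits its bigram multiset into the bigrams of
the part up to and including `x` plus those of the part from `x` on. Cutting at the three
marked occurrences of `x` therefore writes the bigrams as a sum in which the blocks `x v₂ x`
and `x v₃ x` are separate summands, so exchanging them does not change the multiset. The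
swapped string is different because, as `x` occurs in neither block, the first block is
recovered as the longest `x`-free prefix after the first marked `x`.
-/

/-- The multiset of bigrams (length-2 contiguous substrings) of a list. -/
def bigrams {β : Type*} (l : List β) : Multiset (β × β) :=
  (l.zip l.tail : List (β × β))

/-- The delimited form `$w$` of a string `w` over `α`, with `none` as the delimiter. -/
def delim {α : Type*} (w : List α) : List (Option α) :=
  none :: (w.map some ++ [none])

/-- The bigram encoding of a string: the multiset of bigrams of its delimited form. -/
def Phi {α : Type*} (w : List α) : Multiset (Option α × Option α) :=
  bigrams (delim w)

/-- A string is uniquely decodable if it is the only string with its bigram encoding. -/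
def UD {α : Type*} (w : List α) : Prop :=
  ∀ w' : List α, Phi w' = Phi w → w' = w

theorem bigrams_cons_cons {β : Type*} (b c : β) (l : List β) :
    bigrams (b :: c :: l) = (b, c) ::ₘ bigrams (c :: l) := rfl

theorem bigrams_append_cons {β : Type*} (l₁ : List β) (a : β) (l₂ : List β) :
    bigrams (l₁ ++ a :: l₂) = bigrams (l₁ ++ [a]) + bigrams (a :: l₂) := by
  induction l₁ with
  | nil => simp [bigrams]
  | cons b l ih =>
    cases l with
    | nil => rfl
    | cons c l =>
      simp only [List.cons_append] at ih ⊢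
      rw [bigrams_cons_cons, bigrams_cons_cons, ih, Multiset.cons_add]

theorem bigrams_swap_blocks {β : Type*} (y : β) (p a b s : List β) :
    bigrams (p ++ y :: (a ++ y :: (b ++ y :: s)))
      = bigrams (p ++ y :: (b ++ y :: (a ++ y :: s))) := by
  have split : ∀ c d : List β, bigrams (p ++ y :: (c ++ y :: (d ++ y :: s)))
      = bigrams (p ++ [y]) + bigrams (y :: c ++ [y]) + bigrams (y :: d ++ [y])
        + bigrams (y :: s) := fun c d => by
    rw [bigrams_append_cons, ← List.cons_append, bigrams_append_cons (y :: c), ← List.cons_append,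
      bigrams_append_cons (y :: d), add_assoc, add_assoc]
  rw [split, split, add_right_comm (bigrams (p ++ [y]))]

theorem Phi_swap_blocks {α : Type*} (x : α) (v a b u : List α) :
    Phi (v ++ [x] ++ a ++ [x] ++ b ++ [x] ++ u) = Phi (v ++ [x] ++ b ++ [x] ++ a ++ [x] ++ u) := by
  simpa [Phi, delim] using
    bigrams_swap_blocks (some x) (none :: v.map some) (a.map some) (b.map some)
      (u.map some ++ [none])

theorem List.eq_of_append_cons_eq_of_notMem {β : Type*} {x : β} {a b s t : List β}
    (ha : x ∉ a) (hb : x ∉ b) (h : a ++ x :: s = b ++ x :: t) : a = b := by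
  classical
  have prefix_eq : ∀ {l r : List β}, x ∉ l → (l ++ x :: r).takeWhile (· ≠ x) = l := fun hl => by
    rw [List.takeWhile_append_of_pos fun c hc => by simpa using ne_of_mem_of_not_mem hc hl]
    simp
  rw [← prefix_eq (r := s) ha, h, prefix_eq hb]

theorem not_UD_of_three_occurrences_general {α : Type*}
    (x : α) (v₁ v₂ v₃ u : List α)
    (h2 : x ∉ v₂) (h3 : x ∉ v₃) (hne : v₂ ≠ v₃) :
    Phi (v₁ ++ [x] ++ v₃ ++ [x] ++ v₂ ++ [x] ++ u)
      = Phi (v₁ ++ [x] ++ v₂ ++ [x] ++ v₃ ++ [x] ++ u) ∧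
    ¬ UD (v₁ ++ [x] ++ v₂ ++ [x] ++ v₃ ++ [x] ++ u) := by
  have hPhi := Phi_swap_blocks x v₁ v₃ v₂ u
  refine ⟨hPhi, fun hUD => hne ?_⟩
  have heq := hUD _ hPhi
  simp only [List.append_assoc, List.append_cancel_left_eq, List.cons_append, List.cons.injEq,
    true_and] at heq
  exact (List.eq_of_append_cons_eq_of_notMem h3 h2 heq).symm

theorem not_UD_of_three_occurrences {α : Type*} [Fintype α]
    (x : α) (v₁ v₂ v₃ u : List α)
    (h2 : x ∉ v₂) (h3 : x ∉ v₃) (hne : v₂ ≠ v₃) :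
    Phi (v₁ ++ [x] ++ v₃ ++ [x] ++ v₂ ++ [x] ++ u)
      = Phi (v₁ ++ [x] ++ v₂ ++ [x] ++ v₃ ++ [x] ++ u) ∧
    ¬ UD (v₁ ++ [x] ++ v₂ ++ [x] ++ v₃ ++ [x] ++ u) :=
  not_UD_of_three_occurrences_general x v₁ v₂ v₃ u h2 h3 hne
end

section
/- Every string in an obstruction language K_{x,a,b} is not uniquely decodable from its bigrams; i.e., L_OBST ⊆ Σ* \ L_UNIQ. -/
/-- The obstruction language `I_{x,a,b} = Σ* a x (Σ\{a})* b Σ*`. -/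
def Ilang {α : Type*} (x a b : α) : Language α :=
  {w | ∃ p m s : List α, w = p ++ a :: x :: (m ++ b :: s) ∧ a ∉ m}

/-- The obstruction language `J_{x,a,b} = Σ* a (Σ\{x})* b Σ*`. -/
def Jlang {α : Type*} (x a b : α) : Language α :=
  {w | ∃ p m s : List α, w = p ++ a :: (m ++ b :: s) ∧ x ∉ m}

/-- The obstruction language `K_{x,a,b} = I_{x,a,b} ∩ J_{x,a,b}`. -/
def Klang {α : Type*} (x a b : α) : Language α :=
  {w | w ∈ Ilang x a b ∧ w ∈ Jlang x a b}

/-! A word in `K_{x,a,b}` contains two factors `a y b` and `a z b` that overlap in at most one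
letter, where `y` starts with `x` and `z` contains no `x`. Exchanging `y` and `z` permutes the
pieces `A a`, `a y b`, `b B a`, `a z b`, `b C` whose bigrams make up those of the word, so the
bigram multiset is unchanged; the word changes, because right after the first `a` one version
reads `x` and the other does not. When the factors share a letter (then `a = b`) the same
argument runs with the pieces `A a`, `a y a`, `a z a`, `a C`. -/

section Bigrams

variable {β : Type*}

lemma bigrams_append_cons_s15 (u : List β) (c : β) (v : List β) :
    bigrams (u ++ c :: v) = bigrams (u ++ [c]) + bigrams (c :: v) := by
  induction u with
  | nil => simp [bigrams]
  | cons h u ih =>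
    cases u with
    | nil => simp [bigrams]
    | cons h' u => simpa [bigrams] using ih

lemma bigrams_swap_blocks_s15 (c d : β) (A y B z C : List β) :
    bigrams (A ++ c :: y ++ d :: B ++ c :: z ++ d :: C)
      = bigrams (A ++ c :: z ++ d :: B ++ c :: y ++ d :: C) := by
  have split : ∀ y z : List β, bigrams (A ++ c :: y ++ d :: B ++ c :: z ++ d :: C)
      = bigrams (A ++ [c]) + bigrams (c :: y ++ [d]) + bigrams (d :: B ++ [c])
          + bigrams (c :: z ++ [d]) + bigrams (d :: C) := by
    intro y z
    simp only [List.append_assoc, List.cons_append]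
    rw [bigrams_append_cons_s15 A, ← List.cons_append, bigrams_append_cons_s15 (c :: y),
      ← List.cons_append, bigrams_append_cons_s15 (d :: B), ← List.cons_append,
      bigrams_append_cons_s15 (c :: z)]
    simp only [List.cons_append, add_assoc]
  rw [split, split]
  abel

lemma bigrams_swap_adjacent_blocks (c : β) (A y z C : List β) :
    bigrams (A ++ c :: y ++ c :: z ++ c :: C)
      = bigrams (A ++ c :: z ++ c :: y ++ c :: C) := by
  have split : ∀ y z : List β, bigrams (A ++ c :: y ++ c :: z ++ c :: C)
      = bigrams (A ++ [c]) + bigrams (c :: y ++ [c]) + bigrams (c :: z ++ [c])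
          + bigrams (c :: C) := by
    intro y z
    simp only [List.append_assoc, List.cons_append]
    rw [bigrams_append_cons_s15 A, ← List.cons_append, bigrams_append_cons_s15 (c :: y),
      ← List.cons_append, bigrams_append_cons_s15 (c :: z)]
    simp only [List.cons_append, add_assoc]
  rw [split, split]
  abel

end Bigrams

section Decoding

variable {α : Type*}

lemma Phi_swap_blocks_s15 (c d : α) (A y B z C : List α) :
    Phi (A ++ c :: y ++ d :: B ++ c :: z ++ d :: C)
      = Phi (A ++ c :: z ++ d :: B ++ c :: y ++ d :: C) := by
  simpa [Phi, delim] using bigrams_swap_blocks_s15 (some c) (some d) (none :: A.map some)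
    (y.map some) (B.map some) (z.map some) (C.map some ++ [none])

lemma Phi_swap_adjacent_blocks (c : α) (A y z C : List α) :
    Phi (A ++ c :: y ++ c :: z ++ c :: C) = Phi (A ++ c :: z ++ c :: y ++ c :: C) := by
  simpa [Phi, delim] using bigrams_swap_adjacent_blocks (some c) (none :: A.map some)
    (y.map some) (z.map some) (C.map some ++ [none])

lemma not_UD_of_swap_blocks {c d : α} (A y B z C : List α)
    (hne : y ++ d :: B ++ c :: z ≠ z ++ d :: B ++ c :: y) :
    ¬ UD (A ++ c :: y ++ d :: B ++ c :: z ++ d :: C) := by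
  intro hUD
  apply hne (List.append_cancel_right (bs := d :: C) _)
  simpa using (hUD _ (Phi_swap_blocks_s15 c d A z B y C)).symm

lemma not_UD_of_swap_adjacent_blocks {c : α} (A y z C : List α)
    (hne : y ++ c :: z ≠ z ++ c :: y) :
    ¬ UD (A ++ c :: y ++ c :: z ++ c :: C) := by
  intro hUD
  apply hne (List.append_cancel_right (bs := c :: C) _)
  simpa using (hUD _ (Phi_swap_adjacent_blocks c A z y C)).symm

end Decoding

section Factorizations

variable {α : Type*}

lemma cons_ne_append_cons {x r : α} {L n M : List α} (hxn : x ∉ n) (hr : r ≠ x) :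
    x :: L ≠ n ++ r :: M := by
  intro h
  cases n with
  | nil => exact hr (List.cons.inj h).1.symm
  | cons c n => exact hxn ((List.cons.inj h).1 ▸ List.mem_cons_self)

lemma append_cons_eq_append_cons_of_not_mem {a b : α} {m s e r : List α} (ha : a ∉ m)
    (h : m ++ b :: s = e ++ a :: r) :
    (e = m ∧ b = a ∧ s = r) ∨ ∃ B, e = m ++ b :: B ∧ s = B ++ a :: r := by
  rcases List.append_eq_append_iff.mp h with ⟨c, rfl, hc⟩ | ⟨c, rfl, hc⟩
  · rcases List.cons_eq_append_iff.mp hc with ⟨rfl, hc⟩ | ⟨B, rfl, rfl⟩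
    · simp_all
    · exact Or.inr ⟨B, rfl, rfl⟩
  · rcases c with _ | ⟨c, c'⟩ <;> simp_all

lemma append_cons_eq_append_cons_cons_of_not_mem {x a b : α} {n t e R : List α} (hxn : x ∉ n)
    (hb : b ≠ x) (h : n ++ b :: t = e ++ a :: x :: R) :
    (e = n ∧ b = a ∧ t = x :: R) ∨ ∃ B, e = n ++ b :: B ∧ t = B ++ a :: x :: R := by
  rcases List.append_eq_append_iff.mp h with ⟨c, rfl, hc⟩ | ⟨c, rfl, hc⟩
  · rcases List.cons_eq_append_iff.mp hc with ⟨rfl, hc⟩ | ⟨B, rfl, rfl⟩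
    · simp_all
    · exact Or.inr ⟨B, rfl, rfl⟩
  · rcases c with _ | ⟨c, c'⟩
    · simp_all
    · simp only [List.cons_append, List.cons.injEq] at hc
      exact absurd hc.2 (cons_ne_append_cons (fun hx => hxn (by simp [hx])) hb)

lemma mem_Klang_cases {x a b : α} (ha : a ≠ x) (hb : b ≠ x) {w : List α}
    (hw : w ∈ Klang x a b) :
    ∃ A m B n C, x ∉ n ∧
      (w = A ++ a :: (x :: m) ++ b :: B ++ a :: n ++ b :: C ∨
        w = A ++ a :: n ++ b :: B ++ a :: (x :: m) ++ b :: C ∨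
        a = b ∧ (w = A ++ a :: (x :: m) ++ a :: n ++ a :: C ∨
          w = A ++ a :: n ++ a :: (x :: m) ++ a :: C)) := by
  obtain ⟨⟨p, m, s, rfl, ham⟩, q, n, t, hpq, hxn⟩ := hw
  -- The two marked occurrences of `a` differ, as only the first is followed by `x`.
  rcases List.append_eq_append_iff.mp hpq with ⟨e, rfl, he⟩ | ⟨e, rfl, he⟩
  · rcases List.cons_eq_append_iff.mp he with ⟨rfl, he'⟩ | ⟨e, rfl, he'⟩
    · exact absurd (List.cons.inj he').2.symm (cons_ne_append_cons hxn hb)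
    rcases append_cons_eq_append_cons_of_not_mem (m := x :: m) (by simp [ha, ham]) he' with
      ⟨rfl, rfl, rfl⟩ | ⟨B, rfl, rfl⟩
    · exact ⟨p, m, [], n, t, hxn, Or.inr (Or.inr ⟨rfl, Or.inl (by simp)⟩)⟩
    · exact ⟨p, m, B, n, t, hxn, Or.inl (by simp)⟩
  · rcases List.cons_eq_append_iff.mp he with ⟨rfl, he'⟩ | ⟨e, rfl, he'⟩
    · exact absurd (List.cons.inj he').2 (cons_ne_append_cons hxn hb)
    rcases append_cons_eq_append_cons_cons_of_not_mem hxn hb he' with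
      ⟨rfl, rfl, rfl⟩ | ⟨B, rfl, rfl⟩
    · exact ⟨q, m, [], e, s, hxn, Or.inr (Or.inr ⟨rfl, Or.inr (by simp)⟩)⟩
    · exact ⟨q, m, B, n, s, hxn, Or.inr (Or.inl (by simp))⟩

end Factorizations

theorem obstruction_not_UD_general {α : Type*} (x a b : α)
    (ha : a ≠ x) (hb : b ≠ x) (w : List α) (hw : w ∈ Klang x a b) :
    ¬ UD w := by
  obtain ⟨A, m, B, n, C, hxn, rfl | rfl | ⟨rfl, rfl | rfl⟩⟩ := mem_Klang_cases ha hb hw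
  · exact not_UD_of_swap_blocks A _ B n C (by simpa using cons_ne_append_cons hxn hb)
  · exact not_UD_of_swap_blocks A n B _ C (by simpa using (cons_ne_append_cons hxn hb).symm)
  · exact not_UD_of_swap_adjacent_blocks A _ n C (by simpa using cons_ne_append_cons hxn ha)
  · exact not_UD_of_swap_adjacent_blocks A n _ C
      (by simpa using (cons_ne_append_cons hxn ha).symm)

theorem obstruction_not_UD {α : Type*} [Fintype α] (x a b : α)
    (ha : a ≠ x) (hb : b ≠ x) (w : List α) (hw : w ∈ Klang x a b) :
    ¬ UD w :=
  obstruction_not_UD_general x a b ha hb w hw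
end
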